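/- arXiv:2005.11707 — 7 statements merged into one kernel-verified Lean document; each statement's English description precedes it below -/
import Mathlib

section
/- For any m ≥ 3, the set {m+1} ∪ {m+3, m+4, ..., 2m+1} ∪ {2m+3} is strongly sum-free: no a, b, c in the set (not necessarily distinct) satisfy a + b = c. -/
theorem stmt4 (m : ℕ) (hm : 3 ≤ m) :
    let T : Finset ℕ := {m + 1} ∪ Finset.Icc (m + 3) (2 * m + 1) ∪ {2 * m + 3}
    ∀ a ∈ T, ∀ b ∈ T, ∀ c ∈ T, a + b ≠ c := by
  intro T a ha b hb c hc
  simp only [T, Finset.mem_union, Finset.mem_singleton, Finset.mem_Icc] at ha hb hc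
  omega
end

section
/- Let S be a weakly sum-free subset of {1,...,m} such that S contains no pair a, 2a with a > 4, and set S' = S ∪ {3m+4-a : a ∈ S, a > 4}. Then for any forbidden sum a + b = c with a, b, c ∈ S' (meaning a + b = c with either a ≠ b, or a = b > 4), it cannot happen that c > 2m+3. -/
def WeaklySumFree (S : Finset ℕ) : Prop :=
  ∀ a ∈ S, ∀ b ∈ S, ∀ c ∈ S, a ≠ b → a ≠ c → b ≠ c → a + b ≠ c

theorem stmt5 (m : ℕ) (hm : 1 ≤ m) (S : Finset ℕ) (hS : S ⊆ Finset.Icc 1 m)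
    (hwsf : WeaklySumFree S) (hdouble : ∀ a ∈ S, 4 < a → 2 * a ∉ S)
    (S' : Finset ℕ)
    (hS' : S' = S ∪ (S.filter (fun a => 4 < a)).image (fun a => 3 * m + 4 - a))
    (a b c : ℕ) (ha : a ∈ S') (hb : b ∈ S') (hc : c ∈ S')
    (hsum : a + b = c) (hforb : a ≠ b ∨ 4 < a) :
    ¬ (2 * m + 3 < c) := by
  intro hcgt
  subst hS'
  simp only [Finset.mem_union, Finset.mem_image, Finset.mem_filter] at ha hb hc
  have hbound : ∀ x ∈ S, 1 ≤ x ∧ x ≤ m := fun x hx => Finset.mem_Icc.mp (hS hx)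
  rcases hc with hcS | ⟨z, ⟨hzS, hz4⟩, hzc⟩
  · have := hbound c hcS; omega
  have hz := hbound z hzS
  rcases ha with haS | ⟨x, ⟨hxS, hx4⟩, hxa⟩ <;>
    rcases hb with hbS | ⟨y, ⟨hyS, hy4⟩, hyb⟩
  · have := hbound a haS; have := hbound b hbS; omega
  · have hy := hbound y hyS
    have ha' := hbound a haS
    have heq : z + a = y := by omega
    by_cases hza : z = a
    · have hy2 : y = 2 * z := by omega
      exact hdouble z hzS hz4 (hy2 ▸ hyS)
    · exact hwsf z hzS a haS y hyS hza (by omega) (by omega) heq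
  · have hx := hbound x hxS
    have hb' := hbound b hbS
    have heq : z + b = x := by omega
    by_cases hzb : z = b
    · have hx2 : x = 2 * z := by omega
      exact hdouble z hzS hz4 (hx2 ▸ hxS)
    · exact hwsf z hzS b hbS x hxS hzb (by omega) (by omega) heq
  · have hx := hbound x hxS
    have hy := hbound y hyS
    omega
end

section
/- Let S be a weakly sum-free subset of {1,...,m} containing no pair a, 2a with a > 4, and let S' = S ∪ {3m+4-a : a ∈ S, a > 4}. Then S' contains no three pairwise distinct elements a, b, c with a + b = c, and no pair a, 2a ∈ S' with a > 4, provided m ≥ 9. -/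
theorem stmt6 (m : ℕ) (hm : 9 ≤ m) (S : Finset ℕ) (hS : S ⊆ Finset.Icc 1 m)
    (hwsf : WeaklySumFree S) (hdouble : ∀ a ∈ S, 4 < a → 2 * a ∉ S)
    (S' : Finset ℕ)
    (hS' : S' = S ∪ (S.filter (fun a => 4 < a)).image (fun a => 3 * m + 4 - a)) :
    WeaklySumFree S' ∧ ∀ a ∈ S', 4 < a → 2 * a ∉ S' := by
  subst hS'
  have hbound : ∀ x ∈ S, 1 ≤ x ∧ x ≤ m := fun x hx => by
    have := hS hx; simpa [Finset.mem_Icc] using this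
  have hmem : ∀ y, y ∈ S ∪ (S.filter (fun a => 4 < a)).image (fun a => 3 * m + 4 - a) →
      (y ∈ S ∧ 1 ≤ y ∧ y ≤ m) ∨ (∃ x, x ∈ S ∧ 4 < x ∧ x ≤ m ∧ x + y = 3 * m + 4) := by
    intro y hy
    rcases Finset.mem_union.1 hy with h | h
    · exact Or.inl ⟨h, hbound y h⟩
    · rcases Finset.mem_image.1 h with ⟨x, hx, rfl⟩
      rcases Finset.mem_filter.1 hx with ⟨hxS, hx4⟩
      have hb := hbound x hxS
      exact Or.inr ⟨x, hxS, hx4, hb.2, by omega⟩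
  constructor
  · intro a ha b hb c hc hab hac hbc habc
    rcases hmem a ha with haS | ⟨x, hxS, hx4, hxm, hxa⟩ <;>
      rcases hmem b hb with hbS | ⟨y, hyS, hy4, hym, hyb⟩ <;>
        rcases hmem c hc with hcS | ⟨z, hzS, hz4, hzm, hzc⟩
    · exact hwsf a haS.1 b hbS.1 c hcS.1 hab hac hbc habc
    · omega
    · omega
    · -- a ∈ S, b and c in the image part: a + z = y
      have key : a + z = y := by omega
      by_cases haz : a = z
      · have hy2 : y = 2 * z := by omega
        exact hdouble z hzS hz4 (hy2 ▸ hyS)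
      · have hay : a ≠ y := by omega
        have hzy : z ≠ y := by omega
        exact hwsf a haS.1 z hzS y hyS haz hay hzy key
    · omega
    · -- b ∈ S, a and c in the image part: b + z = x
      have key : b + z = x := by omega
      by_cases hbz : b = z
      · have hx2 : x = 2 * z := by omega
        exact hdouble z hzS hz4 (hx2 ▸ hxS)
      · have hbx : b ≠ x := by omega
        have hzx : z ≠ x := by omega
        exact hwsf b hbS.1 z hzS x hxS hbz hbx hzx key
    · omega
    · omega
  · intro a ha h4 h2a
    rcases hmem a ha with haS | ⟨x, hxS, hx4, hxm, hxa⟩ <;>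
      rcases hmem (2 * a) h2a with h | ⟨y, hyS, hy4, hym, hya⟩
    · exact hdouble a haS.1 h4 h.1
    · omega
    · omega
    · omega
end

section
/- There exists a weak Schur partition of {1,...,62} into 4 subsets; hence WS(4) ≥ 62. -/
def IsWeakSchurPartition (s n : ℕ) (P : Fin s → Finset ℕ) : Prop :=
  (∀ i, (P i).Nonempty) ∧ (∀ i j, i ≠ j → Disjoint (P i) (P j)) ∧
  (Finset.univ.biUnion P = Finset.Icc 1 n) ∧ (∀ i, WeaklySumFree (P i))

noncomputable def WS (s : ℕ) : ℕ :=
  sSup {n | ∃ P : Fin s → Finset ℕ, IsWeakSchurPartition s n P}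

open Filter

/-- An explicit weak Schur partition of `{1, ..., 62}` into 4 parts. -/
def myP : Fin 4 → Finset ℕ :=
  ![{1, 2, 4, 8, 11, 22, 48, 51, 54, 57, 60},
    {3, 5, 6, 7, 19, 21, 23, 49, 50, 61, 62},
    {9, 10, 12, 13, 14, 15, 16, 17, 18, 20, 52, 53, 55, 56, 58, 59},
    (Finset.Icc 24 47)]

set_option maxRecDepth 10000 in
lemma myP_ok : IsWeakSchurPartition 4 62 myP := by
  unfold IsWeakSchurPartition WeaklySumFree myP
  decide

/-- No 4-coloring of the positive integers avoids monochromatic triples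
`a + b = c` with `a ≠ b` (a consequence of Hindman's theorem). -/
lemma no_global_coloring (g : ℕ → Fin 4)
    (hg : ∀ a b c : ℕ, 1 ≤ a → 1 ≤ b → a + b = c → a ≠ b →
      ¬(g a = g b ∧ g a = g c)) : False := by
  obtain ⟨cl, ⟨i, rfl⟩, a, ha⟩ := Hindman.exists_FS_of_finite_cover
      (Set.range (fun i : Fin 4 => {x : ℕ+ | g x = i})) (Set.finite_range _)
      (by intro x _; exact Set.mem_sUnion.2 ⟨_, ⟨g x, rfl⟩, rfl⟩)
  have key : ∀ (k : ℕ) (b : Stream' ℕ+), ∃ m ∈ Hindman.FS b, k + 1 ≤ (m : ℕ) := by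
    intro k
    induction k with
    | zero => exact fun b => ⟨b.head, Hindman.FS.head b, b.head.2⟩
    | succ k ih =>
      intro b
      obtain ⟨m, hm, hk⟩ := ih b.tail
      exact ⟨b.head + m, Hindman.FS.cons b m hm, by
        push_cast; have : (1:ℕ) ≤ ((b.head : ℕ+) : ℕ) := b.head.one_le; omega⟩
  obtain ⟨y, hy, hylarge⟩ := key (a.head : ℕ) a.tail
  have hx : a.head ∈ Hindman.FS a := Hindman.FS.head a
  have hy' : y ∈ Hindman.FS a := Hindman.FS.tail a y hy
  have hz : a.head + y ∈ Hindman.FS a := Hindman.FS.cons a y hy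
  refine hg (a.head : ℕ) (y : ℕ) ((a.head + y : ℕ+) : ℕ) a.head.2 y.2
    (by rw [PNat.add_coe]) (by omega) ⟨?_, ?_⟩
  · exact (ha hx).trans (ha hy').symm
  · exact (ha hx).trans (ha hz).symm

/-- From a weak Schur partition of `[1, n]` with `N ≤ n`, extract a coloring of ℕ
with no monochromatic weak Schur triple inside `[1, N]`. -/
lemma exists_good_coloring {N n : ℕ} (hNn : N ≤ n) {P : Fin 4 → Finset ℕ}
    (hP : IsWeakSchurPartition 4 n P) :
    ∃ f : ℕ → Fin 4, ∀ a b c : ℕ, 1 ≤ a → 1 ≤ b → a + b = c → c ≤ N → a ≠ b →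
      ¬(f a = f b ∧ f a = f c) := by
  obtain ⟨-, -, hcov, hwsf⟩ := hP
  have hmem : ∀ k, 1 ≤ k → k ≤ n → ∃ i, k ∈ P i := by
    intro k h1 h2
    have : k ∈ Finset.univ.biUnion P := by
      rw [hcov]; exact Finset.mem_Icc.2 ⟨h1, h2⟩
    simpa using Finset.mem_biUnion.1 this
  classical
  refine ⟨fun k => if hk : ∃ i, k ∈ P i then hk.choose else 0, ?_⟩
  intro a b c ha hb habc hcN hab ⟨h1, h2⟩
  have hca : a ≤ n := by omega
  have hcb : b ≤ n := by omega
  have hcc : c ≤ n := by omega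
  have Ha := hmem a ha hca
  have Hb := hmem b hb hcb
  have Hc := hmem c (by omega) hcc
  simp only [dif_pos Ha, dif_pos Hb] at h1
  simp only [dif_pos Ha, dif_pos Hc] at h2
  have hma : a ∈ P Ha.choose := Ha.choose_spec
  have hmb : b ∈ P Ha.choose := h1 ▸ Hb.choose_spec
  have hmc : c ∈ P Ha.choose := h2 ▸ Hc.choose_spec
  exact hwsf Ha.choose a hma b hmb c hmc hab (by omega) (by omega) habc

/-- The set of `n` admitting a weak Schur partition into 4 parts is bounded
(by a compactness argument reducing to `no_global_coloring`). -/
lemma bdd_weak_schur : BddAbove {n | ∃ P : Fin 4 → Finset ℕ, IsWeakSchurPartition 4 n P} := by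
  by_contra hbdd
  rw [not_bddAbove_iff] at hbdd
  have step1 : ∀ N : ℕ, ∃ f : ℕ → Fin 4,
      ∀ a b c : ℕ, 1 ≤ a → 1 ≤ b → a + b = c → c ≤ N → a ≠ b →
        ¬(f a = f b ∧ f a = f c) := by
    intro N
    obtain ⟨n, ⟨P, hP⟩, hn⟩ := hbdd N
    exact exists_good_coloring hn.le hP
  choose F hF using step1
  set U : Ultrafilter ℕ := hyperfilter ℕ with hU
  have hlim : ∀ k : ℕ, ∃ i : Fin 4, {N | F N k = i} ∈ U := by
    intro k
    have : (⋃ i ∈ (Finset.univ : Finset (Fin 4)), {N | F N k = i}) ∈ U := by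
      have : (⋃ i ∈ (Finset.univ : Finset (Fin 4)), {N | F N k = i}) = Set.univ := by
        ext N; simp
      rw [this]; exact Filter.univ_mem
    simpa using (Ultrafilter.finite_biUnion_mem_iff (Finset.finite_toSet _)).1 this
  choose g hgmem using hlim
  refine no_global_coloring g ?_
  rintro a b c ha hb habc hab ⟨h1, h2⟩
  have hD : {N | c ≤ N} ∈ U := by
    have : {N : ℕ | c ≤ N} = {N : ℕ | N < c}ᶜ := by ext N; simp [not_lt]
    rw [this]
    exact compl_mem_hyperfilter_of_finite (Set.finite_Iio c)
  have hmem : ({N | F N a = g a} ∩ ({N | F N b = g b} ∩ ({N | F N c = g c}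
      ∩ {N | c ≤ N}))) ∈ U :=
    Filter.inter_mem (hgmem a) (Filter.inter_mem (hgmem b)
      (Filter.inter_mem (hgmem c) hD))
  obtain ⟨N, hNa, hNb, hNc, hNd⟩ := Ultrafilter.nonempty_of_mem hmem
  exact hF N a b c ha hb habc hNd hab ⟨by rw [hNa, hNb, h1], by rw [hNa, hNc, h2]⟩

theorem stmt13 :
    (∃ P : Fin 4 → Finset ℕ, IsWeakSchurPartition 4 62 P) ∧ 62 ≤ WS 4 := by
  refine ⟨⟨myP, myP_ok⟩, le_csSup bdd_weak_schur ⟨myP, myP_ok⟩⟩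
end

section
/- There exists a weak Schur partition of {1,...,185} into 5 subsets; hence WS(5) ≥ 185. -/
/-!
The partition is exhibited and checked by computation. Since `sSup` of an unbounded set of
naturals is `0`, the inequality `185 ≤ WS 5` also needs the lengths of weak Schur partitions
into `s` parts to be bounded. Colour each `d ∈ [1, n]` by the part containing it; a Ramsey
argument on the differences `b - a` of points of `[0, n]` yields, for `n` large, four points
`w < x < y < z` all of whose differences lie in one part, and one of the decompositions
`z - w = (x - w) + (z - x)` or `z - w = (y - w) + (z - y)` has distinct summands.
-/

open Finset

theorem WeaklySumFree.of_forall_lt_add_notMem {S : Finset ℕ}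
    (h : ∀ a ∈ S, ∀ b ∈ S, a < b → a + b ∉ S) : WeaklySumFree S := by
  intro a ha b hb c hc hab _ _ habc
  subst habc
  rcases lt_or_gt_of_ne hab with hlt | hlt
  · exact h a ha b hb hlt hc
  · exact h b hb a ha hlt (add_comm a b ▸ hc)

section MinHomogeneous

variable {α : Type*} [Fintype α] (col : ℕ → α)

def IsMinHomogeneous (Y : Finset ℕ) : Prop :=
  ∀ a ∈ Y, ∀ b ∈ Y, ∀ c ∈ Y, a < b → a < c → col (b - a) = col (c - a)

theorem exists_isMinHomogeneous_subset (m : ℕ) {X : Finset ℕ}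
    (hX : (Fintype.card α + 1) ^ m ≤ #X) : ∃ Y ⊆ X, #Y = m ∧ IsMinHomogeneous col Y := by
  classical
  induction m generalizing X with
  | zero => exact ⟨∅, empty_subset _, rfl, by simp [IsMinHomogeneous]⟩
  | succ m ih =>
    have hpow : 1 ≤ (Fintype.card α + 1) ^ m := Nat.one_le_pow _ _ (Nat.succ_pos _)
    have hXcard : Fintype.card α * (Fintype.card α + 1) ^ m + 1 ≤ #X := by
      rw [pow_succ] at hX; nlinarith
    have hXne : X.Nonempty := card_pos.mp (by omega)
    set x₀ := X.min' hXne
    have hx₀ : x₀ ∈ X := X.min'_mem hXne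
    obtain ⟨i, -, hi⟩ := exists_le_card_fiber_of_mul_le_card_of_maps_to
      (f := fun y => col (y - x₀)) (s := X.erase x₀) (n := (Fintype.card α + 1) ^ m)
      (fun _ _ => mem_univ _) ⟨col 0, mem_univ _⟩
      (by rw [card_univ, card_erase_of_mem hx₀]; omega)
    obtain ⟨Y, hYsub, hY, hYhom⟩ := ih hi
    have hfib : ∀ y ∈ Y, y ∈ X ∧ x₀ < y ∧ col (y - x₀) = i := by
      intro y hy
      obtain ⟨hyX, hyi⟩ := mem_filter.mp (hYsub hy)
      obtain ⟨hyx₀, hyX⟩ := mem_erase.mp hyX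
      exact ⟨hyX, lt_of_le_of_ne (X.min'_le y hyX) (Ne.symm hyx₀), hyi⟩
    have hmemY : ∀ b ∈ insert x₀ Y, x₀ < b → b ∈ Y := fun b hb hlt =>
      (mem_insert.mp hb).resolve_left hlt.ne'
    refine ⟨insert x₀ Y, insert_subset hx₀ fun y hy => (hfib y hy).1, ?_, ?_⟩
    · rw [card_insert_of_notMem fun h => (hfib x₀ h).2.1.false, hY]
    · intro a ha b hb c hc hab hac
      rcases mem_insert.mp ha with rfl | ha
      · rw [(hfib b (hmemY b hb hab)).2.2, (hfib c (hmemY c hc hac)).2.2]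
      · have hx₀a := (hfib a ha).2.1
        exact hYhom a ha b (hmemY b hb (hx₀a.trans hab)) c (hmemY c hc (hx₀a.trans hac)) hab hac

theorem IsMinHomogeneous.exists_monochromatic {col : ℕ → α} {Y : Finset ℕ}
    (hY : IsMinHomogeneous col Y) {r : ℕ} (hr : Fintype.card α * r < #Y) :
    ∃ i, ∃ T ⊆ Y, #T = r ∧ ∀ a ∈ T, ∀ b ∈ T, a < b → col (b - a) = i := by
  classical
  have hYne : Y.Nonempty := card_pos.mp (by omega)
  set L := Y.max' hYne
  have hL : L ∈ Y := Y.max'_mem hYne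
  obtain ⟨i, -, hi⟩ := exists_le_card_fiber_of_mul_le_card_of_maps_to
    (f := fun a => col (L - a)) (s := Y.erase L) (n := r)
    (fun _ _ => mem_univ _) ⟨col 0, mem_univ _⟩
    (by rw [card_univ, card_erase_of_mem hL]; omega)
  obtain ⟨T, hTsub, hT⟩ := exists_subset_card_eq hi
  have hfib : ∀ a ∈ T, a ∈ Y ∧ a < L ∧ col (L - a) = i := by
    intro a ha
    obtain ⟨haY, hai⟩ := mem_filter.mp (hTsub ha)
    obtain ⟨haL, haY⟩ := mem_erase.mp haY
    exact ⟨haY, lt_of_le_of_ne (Y.le_max' a haY) haL, hai⟩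
  refine ⟨i, T, fun a ha => (hfib a ha).1, hT, fun a ha b hb hab => ?_⟩
  obtain ⟨haY, haL, hai⟩ := hfib a ha
  rw [hY a haY b (hfib b hb).1 L hL hab haL, hai]

end MinHomogeneous

theorem WeaklySumFree.card_lt_four {S T : Finset ℕ} (hS : WeaklySumFree S)
    (hT : ∀ a ∈ T, ∀ b ∈ T, a < b → b - a ∈ S) : #T < 4 := by
  by_contra! h4
  obtain ⟨T', hT'T, hT'⟩ := exists_subset_card_eq h4
  set f := T'.orderEmbOfFin hT'
  have hd : ∀ k l : Fin 4, k < l → f l - f k ∈ S := fun k l hkl =>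
    hT _ (hT'T (T'.orderEmbOfFin_mem hT' k)) _ (hT'T (T'.orderEmbOfFin_mem hT' l))
      (f.strictMono hkl)
  have h01 : f 0 < f 1 := f.strictMono (by decide)
  have h12 : f 1 < f 2 := f.strictMono (by decide)
  have h23 : f 2 < f 3 := f.strictMono (by decide)
  -- `f 1` and `f 2` cannot both be the midpoint of `f 0` and `f 3`
  by_cases hmid : f 1 - f 0 = f 3 - f 1
  · exact hS _ (hd 0 2 (by decide)) _ (hd 2 3 (by decide)) _ (hd 0 3 (by decide))
      (by omega) (by omega) (by omega) (by omega)
  · exact hS _ (hd 0 1 (by decide)) _ (hd 1 3 (by decide)) _ (hd 0 3 (by decide))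
      hmid (by omega) (by omega) (by omega)

theorem IsWeakSchurPartition.lt_pow {s n : ℕ} {P : Fin s → Finset ℕ}
    (hP : IsWeakSchurPartition s n P) : n < (s + 1) ^ (4 * s + 1) := by
  obtain ⟨-, -, hcover, hfree⟩ := hP
  by_contra! hn
  have hcolour : ∀ d ∈ Icc 1 n, ∃ i, d ∈ P i := fun d hd => by
    obtain ⟨i, -, hi⟩ := mem_biUnion.mp (hcover ▸ hd)
    exact ⟨i, hi⟩
  have : Nonempty (Fin s) :=
    (hcolour 1 (mem_Icc.mpr ⟨le_rfl, le_trans (Nat.one_le_pow _ _ s.succ_pos) hn⟩)).nonempty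
  let col : ℕ → Fin s := fun d => Classical.epsilon fun i => d ∈ P i
  obtain ⟨Y, hYsub, hY, hYhom⟩ := exists_isMinHomogeneous_subset col (4 * s + 1)
    (X := range (n + 1)) (by simpa using hn.trans (Nat.le_succ n))
  obtain ⟨i, T, hTY, hT, hTi⟩ := hYhom.exists_monochromatic (r := 4)
    (by rw [hY, Fintype.card_fin]; omega)
  refine absurd ((hfree i).card_lt_four (T := T) fun a ha b hb hab => ?_) (by omega)
  have hbn : b ≤ n := Nat.lt_succ_iff.mp (mem_range.mp (hYsub (hTY hb)))
  have hmem : b - a ∈ P (col (b - a)) :=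
    Classical.epsilon_spec (hcolour _ (mem_Icc.mpr ⟨by omega, by omega⟩))
  rwa [hTi a ha b hb hab] at hmem

theorem bddAbove_setOf_isWeakSchurPartition (s : ℕ) :
    BddAbove {n | ∃ P : Fin s → Finset ℕ, IsWeakSchurPartition s n P} :=
  ⟨(s + 1) ^ (4 * s + 1), fun _ ⟨_, hP⟩ => hP.lt_pow.le⟩

theorem IsWeakSchurPartition.le_WS {s n : ℕ} {P : Fin s → Finset ℕ}
    (hP : IsWeakSchurPartition s n P) : n ≤ WS s :=
  le_csSup (bddAbove_setOf_isWeakSchurPartition s) ⟨P, hP⟩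

def weakSchurPartition185 : Fin 5 → Finset ℕ :=
  ![{67} ∪ Icc 69 135,
    {3, 5, 6, 7, 19, 21, 23, 51, 52, 53, 64, 65, 66, 136, 147, 182, 183, 184},
    {9, 10} ∪ Icc 12 18 ∪ {20} ∪ Icc 54 62 ∪ Icc 137 145 ∪ Icc 173 181,
    {24} ∪ Icc 26 49 ∪ Icc 148 171,
    {1, 2, 4, 8, 11, 22, 25, 50, 63, 68, 146, 172, 185}]

theorem isWeakSchurPartition_weakSchurPartition185 :
    IsWeakSchurPartition 5 185 weakSchurPartition185 := by
  refine ⟨by decide +kernel, by decide +kernel, by decide +kernel, fun i => ?_⟩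
  apply WeaklySumFree.of_forall_lt_add_notMem
  revert i
  decide +kernel

theorem stmt14 :
    (∃ P : Fin 5 → Finset ℕ, IsWeakSchurPartition 5 185 P) ∧ 185 ≤ WS 5 :=
  ⟨⟨_, isWeakSchurPartition_weakSchurPartition185⟩,
    isWeakSchurPartition_weakSchurPartition185.le_WS⟩
end

section
/- If S ⊆ {1,...,m} is weakly sum-free and contains no pair a, 2a with a > 4, and b, c ∈ S' := S ∪ {3m+4-a : a ∈ S, a > 4} satisfy b, c > 2m+3 and b < c, then c - b cannot be an element of S' distinct from both b and c. -/
theorem stmt15 (m : ℕ) (hm : 9 ≤ m) (S : Finset ℕ) (hS : S ⊆ Finset.Icc 1 m)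
    (hwsf : WeaklySumFree S) (hdouble : ∀ a ∈ S, 4 < a → 2 * a ∉ S)
    (S' : Finset ℕ)
    (hS' : S' = S ∪ (S.filter (fun a => 4 < a)).image (fun a => 3 * m + 4 - a))
    (b c : ℕ) (hb : b ∈ S') (hc : c ∈ S')
    (hb2 : 2 * m + 3 < b) (hc2 : 2 * m + 3 < c) (hbc : b < c) :
    ¬ (c - b ∈ S' ∧ c - b ≠ b ∧ c - b ≠ c) := by
  rintro ⟨hd, -, -⟩
  subst hS'
  simp only [Finset.mem_union, Finset.mem_image, Finset.mem_filter] at hb hc hd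
  -- b and c must come from the image part
  have hbm : ∀ x ∈ S, 1 ≤ x ∧ x ≤ m := fun x hx => by
    have := hS hx; simpa [Finset.mem_Icc] using this
  rcases hb with hb | ⟨a₁, ⟨ha₁S, ha₁4⟩, hb⟩
  · have := hbm b hb; omega
  rcases hc with hc | ⟨a₂, ⟨ha₂S, ha₂4⟩, hc⟩
  · have := hbm c hc; omega
  have h1 := hbm a₁ ha₁S
  have h2 := hbm a₂ ha₂S
  have hdval : c - b = a₁ - a₂ := by omega
  have ha21 : a₂ < a₁ := by omega
  rcases hd with hd | ⟨a₃, ⟨ha₃S, ha₃4⟩, hd3⟩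
  · -- c - b = a₁ - a₂ ∈ S, so by WSF one of the distinctness fails
    rw [hdval] at hd
    by_cases hdeq : a₁ - a₂ = a₂
    · have : a₁ = 2 * a₂ := by omega
      exact hdouble a₂ ha₂S (by omega) (this ▸ ha₁S)
    · exact hwsf _ hd _ ha₂S _ ha₁S hdeq (by omega) (by omega) (by omega)
  · have h3 := hbm a₃ ha₃S
    omega
end

section
/- If S ⊆ {1,...,m} is weakly sum-free, contains no pair a, 2a with a > 4, and a + b = c holds with a, b, c ∈ S ∪ {3m+4-x : x ∈ S, x > 4}, a ≤ b, and c ≤ m, then a = b and a ≤ 4. -/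
theorem stmt16 (m : ℕ) (hm : 9 ≤ m) (S : Finset ℕ) (hS : S ⊆ Finset.Icc 1 m)
    (hwsf : WeaklySumFree S) (hdouble : ∀ x ∈ S, 4 < x → 2 * x ∉ S)
    (a b c : ℕ)
    (ha : a ∈ S ∪ (S.filter (fun x => 4 < x)).image (fun x => 3 * m + 4 - x))
    (hb : b ∈ S ∪ (S.filter (fun x => 4 < x)).image (fun x => 3 * m + 4 - x))
    (hc : c ∈ S ∪ (S.filter (fun x => 4 < x)).image (fun x => 3 * m + 4 - x))
    (hsum : a + b = c) (hab : a ≤ b) (hcm : c ≤ m) :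
    a = b ∧ a ≤ 4 := by
  have himg : ∀ y ∈ (S.filter (fun x => 4 < x)).image (fun x => 3 * m + 4 - x), m < y := by
    intro y hy
    simp only [Finset.mem_image, Finset.mem_filter] at hy
    obtain ⟨x, ⟨hxS, _⟩, rfl⟩ := hy
    have := (Finset.mem_Icc.1 (hS hxS)).2
    omega
  have hcS : c ∈ S := by
    rcases Finset.mem_union.1 hc with h | h
    · exact h
    · exact absurd (himg c h) (by omega)
  have haS : a ∈ S := by
    rcases Finset.mem_union.1 ha with h | h
    · exact h
    · have := himg a h; omega
  have hbS : b ∈ S := by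
    rcases Finset.mem_union.1 hb with h | h
    · exact h
    · have := himg b h; omega
  have ha1 : 1 ≤ a := (Finset.mem_Icc.1 (hS haS)).1
  have hb1 : 1 ≤ b := (Finset.mem_Icc.1 (hS hbS)).1
  have hab' : a = b := by
    by_contra hne
    exact hwsf a haS b hbS c hcS hne (by omega) (by omega) hsum
  refine ⟨hab', ?_⟩
  by_contra h4
  have h2a : 2 * a ∉ S := hdouble a haS (by omega)
  have hce : c = 2 * a := by omega
  exact h2a (hce ▸ hcS)
end
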